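/- The band structures in the two valleys are identical: let S ⊂ ℤ×ℤ×{+1,−1} be a finite set closed under the involution ι(m,n,l) = (−m−1,−n,−l), let A(k) be the S×S complex matrix with entries A(k)_{Q,Q'} = H_{Q,Q'}(k) (the K-valley Hamiltonian truncated to S), and define the K'-valley Hamiltonian A'(k) by A'(k)_{Q,Q'} = conj(A(−k)_{ιQ, ιQ'}). Then for every k ∈ ℝ², A(k) is Hermitian and A'(k) has the same characteristic polynomial as A(k); in particular the two valley Hamiltonians have identical eigenvalues with multiplicity at every momentum k. -/

import Mathlib

open Real Complex

noncomputable section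
open scoped Classical

/-- The momentum-space lattice index set ℤ×ℤ×{+1,−1} (layer label in ℤˣ = {1,−1}). -/
abbrev Idx : Type := ℤ × ℤ × ℤˣ

/-- The first-shell moiré reciprocal vectors b₁ = k_θ(1,0), b₂ = R b₁, b₃ = R b₂. -/
def bv (kθ : ℝ) : Fin 3 → ℝ × ℝ
  | 0 => (kθ, 0)
  | 1 => (-(kθ / 2), kθ * Real.sqrt 3 / 2)
  | 2 => (-(kθ / 2), -(kθ * Real.sqrt 3 / 2))

/-- The moiré scattering vectors q₁ = (k_θ/√3)(0,1), q₂ = R q₁, q₃ = R q₂. -/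
def qv (kθ : ℝ) : Fin 3 → ℝ × ℝ
  | 0 => (0, kθ / Real.sqrt 3)
  | 1 => (-(kθ / 2), -(kθ / (2 * Real.sqrt 3)))
  | 2 => (kθ / 2, -(kθ / (2 * Real.sqrt 3)))

/-- κ₊ = (b₁+q₁)/2 = (k_θ/2, k_θ/(2√3)) and κ₋ = (b₁−q₁)/2 = (k_θ/2, −k_θ/(2√3)). -/
def kappa (kθ : ℝ) (l : ℤˣ) : ℝ × ℝ := (kθ / 2, ((l : ℤ) : ℝ) * (kθ / (2 * Real.sqrt 3)))

/-- The vector in ℝ² associated to an index (m,n,l): Q(m,n,l) = m b₁ + n b₂ + κ_l. -/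
def vecOf (kθ : ℝ) (Q : Idx) : ℝ × ℝ :=
  ((Q.1 : ℝ)) • bv kθ 0 + ((Q.2.1 : ℝ)) • bv kθ 1 + kappa kθ Q.2.2

/-- The layer index ζ_Q = ±1. -/
def zetaOf (Q : Idx) : ℤ := ((Q.2.2 : ℤ))

/-- Kronecker delta for vectors in ℝ², valued in ℂ. -/
def deltaV (x y : ℝ × ℝ) : ℂ := if x = y then 1 else 0

/-- Kronecker delta for lattice indices, valued in ℂ. -/
def deltaI (Q Q' : Idx) : ℂ := if Q = Q' then 1 else 0

/-- The squared Euclidean norm on ℝ². -/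
def sqn (p : ℝ × ℝ) : ℝ := p.1 ^ 2 + p.2 ^ 2

/-- The momentum-space Hamiltonian entry
H_{Q,Q'}(k) = −α‖k+Q‖² δ_{Q,Q'}
  + V ∑ᵢ (e^{iψζ_Q} δ_{Q−Q', bᵢ} + e^{−iψζ_Q} δ_{Q−Q', −bᵢ})
  + w ∑ᵢ (δ_{Q−Q', qᵢ} + δ_{Q−Q', −qᵢ}). -/
def Hent (kθ α V w ψ : ℝ) (Q Q' : Idx) (k : ℝ × ℝ) : ℂ :=
  (-(α * sqn (k + vecOf kθ Q)) : ℝ) * deltaI Q Q'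
  + (V : ℝ) * ∑ i : Fin 3,
      (Complex.exp (Complex.I * ((ψ * (zetaOf Q : ℝ)) : ℝ))
          * deltaV (vecOf kθ Q - vecOf kθ Q') (bv kθ i)
        + Complex.exp (-(Complex.I * ((ψ * (zetaOf Q : ℝ)) : ℝ)))
          * deltaV (vecOf kθ Q - vecOf kθ Q') (-bv kθ i))
  + (w : ℝ) * ∑ i : Fin 3,
      (deltaV (vecOf kθ Q - vecOf kθ Q') (qv kθ i)
        + deltaV (vecOf kθ Q - vecOf kθ Q') (-qv kθ i))

end

/-- The pseudo-inversion index involution ι(m,n,l) = (−m−1, −n, −l). -/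
def iotaIdx (Q : Idx) : Idx := (-Q.1 - 1, -Q.2.1, -Q.2.2)

/-- The K-valley Hamiltonian truncated to a finite index set S. -/
noncomputable def Amat (kθ α V w ψ : ℝ) (S : Finset Idx) (k : ℝ × ℝ) :
    Matrix S S ℂ :=
  fun Q Q' => Hent kθ α V w ψ Q.1 Q'.1 k

/-- The K'-valley Hamiltonian A'(k)_{Q,Q'} = conj(A(−k)_{ιQ,ιQ'}), for S closed under ι. -/
noncomputable def A'mat (kθ α V w ψ : ℝ) (S : Finset Idx)
    (hS : ∀ Q ∈ S, iotaIdx Q ∈ S) (k : ℝ × ℝ) : Matrix S S ℂ :=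
  fun Q Q' =>
    (starRingEnd ℂ) (Amat kθ α V w ψ S (-k) ⟨iotaIdx Q.1, hS Q.1 Q.2⟩ ⟨iotaIdx Q'.1, hS Q'.1 Q'.2⟩)

-- auxiliary lemmas
lemma aux_vec_iota (kθ : ℝ) (Q : Idx) : vecOf kθ (iotaIdx Q) = - vecOf kθ Q := by
  simp only [vecOf, iotaIdx, kappa, bv, Prod.ext_iff, Prod.fst_add, Prod.snd_add,
    Prod.smul_fst, Prod.smul_snd, Prod.fst_neg, Prod.snd_neg, smul_eq_mul,
    Units.val_neg, Int.cast_neg, Int.cast_sub, Int.cast_one]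
  constructor <;> push_cast <;> ring

lemma aux_zeta_iota (Q : Idx) : zetaOf (iotaIdx Q) = - zetaOf Q := by
  simp [zetaOf, iotaIdx]

lemma aux_iota_iota (Q : Idx) : iotaIdx (iotaIdx Q) = Q := by
  simp [iotaIdx]

lemma aux_deltaI_iota (Q Q' : Idx) : deltaI (iotaIdx Q) (iotaIdx Q') = deltaI Q Q' := by
  unfold deltaI
  congr 1
  simp only [eq_iff_iff]
  constructor
  · intro h; have := congrArg iotaIdx h; simpa [aux_iota_iota] using this
  · intro h; rw [h]

lemma aux_deltaV_neg_left (x y : ℝ × ℝ) : deltaV (-x) y = deltaV x (-y) := by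
  unfold deltaV
  congr 1
  simp only [eq_iff_iff, neg_eq_iff_eq_neg]

lemma aux_deltaV_real (x y : ℝ × ℝ) : (starRingEnd ℂ) (deltaV x y) = deltaV x y := by
  unfold deltaV; split <;> simp

lemma aux_sqn_neg (p : ℝ × ℝ) : sqn (-p) = sqn p := by
  simp [sqn]

lemma aux_conj_exp_I (r : ℝ) :
    (starRingEnd ℂ) (Complex.exp (Complex.I * (r : ℂ))) = Complex.exp (-(Complex.I * (r : ℂ))) := by
  rw [← Complex.exp_conj, map_mul, Complex.conj_I, Complex.conj_ofReal, neg_mul]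

lemma aux_conj_exp_I' (r : ℝ) :
    (starRingEnd ℂ) (Complex.exp (-(Complex.I * (r : ℂ)))) = Complex.exp (Complex.I * (r : ℂ)) := by
  rw [← Complex.exp_conj, map_neg, map_mul, Complex.conj_I, Complex.conj_ofReal, neg_mul, neg_neg]

lemma aux_Hent_iota (kθ α V w ψ : ℝ) (Q Q' : Idx) (k : ℝ × ℝ) :
    Hent kθ α V w ψ (iotaIdx Q) (iotaIdx Q') (-k) = Hent kθ α V w ψ Q Q' k := by
  unfold Hent
  rw [aux_vec_iota, aux_vec_iota, aux_zeta_iota, aux_deltaI_iota]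
  have hvec : -k + -vecOf kθ Q = -(k + vecOf kθ Q) := by ring
  rw [hvec, aux_sqn_neg]
  have hΔ : -vecOf kθ Q - -vecOf kθ Q' = -(vecOf kθ Q - vecOf kθ Q') := by ring
  rw [hΔ]
  congr 1
  · congr 1
    congr 1
    apply Finset.sum_congr rfl
    intro i _
    rw [aux_deltaV_neg_left, aux_deltaV_neg_left, neg_neg]
    have : (ψ * ((-zetaOf Q : ℤ) : ℝ)) = -(ψ * ((zetaOf Q : ℤ) : ℝ)) := by
      push_cast; ring
    rw [this, Complex.ofReal_neg, mul_neg, neg_neg, add_comm]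
  · congr 1
    apply Finset.sum_congr rfl
    intro i _
    rw [aux_deltaV_neg_left, aux_deltaV_neg_left, neg_neg, add_comm]

lemma aux_key (kθ : ℝ) (hkθ : 0 < kθ) (a b c : ℤ) (hb : b = 2 ∨ b = -2)
    (h : (a:ℝ)*(kθ*Real.sqrt 3/2) + (b:ℝ)*(kθ/(2*Real.sqrt 3)) = (c:ℝ)*(kθ*Real.sqrt 3/2)) :
    False := by
  have s3 : Real.sqrt 3 * Real.sqrt 3 = 3 := Real.mul_self_sqrt (by norm_num)
  have s0 : (0:ℝ) < Real.sqrt 3 := by positivity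
  have hk : kθ ≠ 0 := hkθ.ne'
  have hs : Real.sqrt 3 ≠ 0 := s0.ne'
  field_simp at h
  have h4 : ((3*a+b : ℤ):ℝ)*kθ = ((3*c : ℤ):ℝ)*kθ := by
    push_cast
    linear_combination kθ*h - ((a:ℝ)-(c:ℝ))*kθ*s3
  have h5 : ((3*a+b : ℤ):ℝ) = ((3*c : ℤ):ℝ) := mul_right_cancel₀ hk h4
  have h6 : 3*a + b = 3*c := by exact_mod_cast h5
  omega

lemma aux_no_mixed (kθ : ℝ) (hkθ : 0 < kθ) (Q Q' : Idx) (h : Q.2.2 ≠ Q'.2.2) (i : Fin 3) :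
    vecOf kθ Q - vecOf kθ Q' ≠ bv kθ i ∧ vecOf kθ Q - vecOf kθ Q' ≠ -bv kθ i := by
  obtain ⟨m, n, l⟩ := Q
  obtain ⟨m', n', l'⟩ := Q'
  simp only at h
  have hl : ((l:ℤ) - (l':ℤ) = 2) ∨ ((l:ℤ) - (l':ℤ) = -2) := by
    rcases Int.units_eq_one_or l with h1 | h1 <;> rcases Int.units_eq_one_or l' with h2 | h2 <;>
      subst h1 <;> subst h2 <;> simp_all
  fin_cases i <;> constructor <;>
    (intro heq
     have h2 := congrArg Prod.snd heq
     simp only [vecOf, bv, kappa, Prod.snd_sub, Prod.snd_add, Prod.smul_snd, smul_eq_mul,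
       Prod.snd_neg] at h2) <;>
    first
      | exact aux_key kθ hkθ (n - n') _ 0 hl (by push_cast; linear_combination h2)
      | exact aux_key kθ hkθ (n - n') _ 1 hl (by push_cast; linear_combination h2)
      | exact aux_key kθ hkθ (n - n') _ (-1) hl (by push_cast; linear_combination h2)

lemma aux_Hent_conj (kθ α V w ψ : ℝ) (hkθ : 0 < kθ) (Q Q' : Idx) (k : ℝ × ℝ) :
    (starRingEnd ℂ) (Hent kθ α V w ψ Q' Q k) = Hent kθ α V w ψ Q Q' k := by
  unfold Hent
  have hswap : vecOf kθ Q' - vecOf kθ Q = -(vecOf kθ Q - vecOf kθ Q') := by ring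
  rw [map_add, map_add]
  congr 1
  · congr 1
    · rw [map_mul, Complex.conj_ofReal]
      have hd : (starRingEnd ℂ) (deltaI Q' Q) = deltaI Q Q' := by
        unfold deltaI
        split <;> simp_all [eq_comm]
      rw [hd]
      by_cases hQ : Q = Q'
      · subst hQ; rfl
      · simp [deltaI, hQ]
    · rw [map_mul, Complex.conj_ofReal, map_sum]
      congr 1
      apply Finset.sum_congr rfl
      intro i _
      rw [map_add, map_mul, map_mul, aux_deltaV_real, aux_deltaV_real, aux_conj_exp_I,
        aux_conj_exp_I', hswap, aux_deltaV_neg_left, aux_deltaV_neg_left, neg_neg]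
      by_cases hl : Q.2.2 = Q'.2.2
      · have hz : zetaOf Q' = zetaOf Q := by simp [zetaOf, hl]
        rw [hz]; ring
      · obtain ⟨hb1, hb2⟩ := aux_no_mixed kθ hkθ Q Q' hl i
        simp [deltaV, hb1, hb2]
  · rw [map_mul, Complex.conj_ofReal, map_sum]
    congr 1
    apply Finset.sum_congr rfl
    intro i _
    rw [map_add, aux_deltaV_real, aux_deltaV_real, hswap, aux_deltaV_neg_left,
      aux_deltaV_neg_left, neg_neg, add_comm]

lemma aux_charpoly_transpose {n : Type*} [DecidableEq n] [Fintype n] (M : Matrix n n ℂ) :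
    M.transpose.charpoly = M.charpoly := by
  unfold Matrix.charpoly
  rw [← Matrix.det_transpose]
  congr 1
  ext i j
  by_cases h : i = j <;>
    simp [Matrix.charmatrix_apply, Matrix.transpose_apply, Matrix.diagonal_apply, h, eq_comm]

/-- The band structures in the two valleys are identical: for S finite and closed under ι,
A(k) is Hermitian and the K'-valley Hamiltonian A'(k) has the same characteristic
polynomial as A(k); in particular the two valley Hamiltonians have identical eigenvalues
with multiplicity at every momentum k. -/
theorem valley_band_structures_identical
    (kθ α V w ψ : ℝ) (hkθ : 0 < kθ) (hα : 0 < α)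
    (S : Finset Idx) (hS : ∀ Q ∈ S, iotaIdx Q ∈ S) (k : ℝ × ℝ) :
    (Amat kθ α V w ψ S k).IsHermitian ∧
    (A'mat kθ α V w ψ S hS k).charpoly = (Amat kθ α V w ψ S k).charpoly := by
  constructor
  · apply Matrix.ext
    intro Q Q'
    simp only [Matrix.conjTranspose_apply, Amat]
    exact aux_Hent_conj kθ α V w ψ hkθ Q.1 Q'.1 k
  · have hA' : A'mat kθ α V w ψ S hS k = (Amat kθ α V w ψ S k).transpose := by
      apply Matrix.ext
      intro Q Q'
      simp only [A'mat, Amat, Matrix.transpose_apply]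
      rw [aux_Hent_iota]
      exact aux_Hent_conj kθ α V w ψ hkθ Q'.1 Q.1 k
    rw [hA', aux_charpoly_transpose]
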